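/- arXiv:1704.02597 — 6 statements merged into one kernel-verified Lean document; each statement's English description precedes it below -/
import Mathlib

section
/- Let $u \in C(\mathbb{R}) \cap L^\infty(\mathbb{R})$ with $u=0$ on $(-\infty,0]$, and suppose $u \in C^1(0,+\infty)$ with $u' \in L^1(b_0, +\infty)$ for some $b_0 > 0$. Then for every fixed $\delta > 0$ and $a > 0$, $\lim_{M \to +\infty} \int_{-M}^{M-\delta} \frac{(u(M)-u(y))^2}{|M-y|^{1+2s}}\,dy = 0$. -/
/-!
Substituting `y = M - z` turns the integral into `∫_{z > δ} (u M - u (M - z))² / z^{1+2s}` over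
`z < 2M`. Since `u' ∈ L¹` near `+∞`, `u` has a limit at `+∞`, so for each fixed `z` the integrand
tends to `0`, while boundedness of `u` dominates it by `(2C)² z^{-1-2s}`, integrable on `(δ, ∞)`
because `s > 0`. Dominated convergence concludes.
-/

open MeasureTheory Real Filter Set

theorem setIntegral_Ioo_eq_setIntegral_Ioo_comp_sub_left (g : ℝ → ℝ) (a b c : ℝ) :
    ∫ y in Ioo a b, g y = ∫ z in Ioo (c - b) (c - a), g (c - z) := by
  rw [← preimage_const_sub_Ioo, (volume.measurePreserving_sub_left c).setIntegral_preimage_emb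
    (Homeomorph.subLeft c).measurableEmbedding]

theorem sq_sub_le_of_forall_abs_le {u : ℝ → ℝ} {C : ℝ} (hC : ∀ x, |u x| ≤ C) (x y : ℝ) :
    (u x - u y) ^ 2 ≤ (2 * C) ^ 2 := by
  have hx := abs_le.1 (hC x)
  have hy := abs_le.1 (hC y)
  exact sq_le_sq' (by linarith) (by linarith)

theorem tendsto_setIntegral_Ioo_sq_sub_div_rpow {u : ℝ → ℝ} {C L s δ : ℝ} (hu : Measurable u)
    (hC : ∀ x, |u x| ≤ C) (hu_lim : Tendsto u atTop (nhds L)) (hs : 0 < s)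
    (hδ : 0 < δ) :
    Tendsto (fun M : ℝ => ∫ y in Ioo (-M) (M - δ), (u M - u y) ^ 2 / |M - y| ^ (1 + 2 * s))
      atTop (nhds 0) := by
  set F : ℝ → ℝ → ℝ := fun M => (Iio (2 * M)).indicator
    fun z => (u M - u (M - z)) ^ 2 / |z| ^ (1 + 2 * s)
  have hsubst : ∀ M, ∫ y in Ioo (-M) (M - δ), (u M - u y) ^ 2 / |M - y| ^ (1 + 2 * s)
      = ∫ z in Ioi δ, F M z := by
    intro M
    rw [setIntegral_Ioo_eq_setIntegral_Ioo_comp_sub_left _ _ _ M, setIntegral_indicator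
      measurableSet_Iio, Ioi_inter_Iio]
    simp only [sub_sub_cancel, sub_neg_eq_add, two_mul]
  simp only [hsubst]
  rw [← integral_zero ℝ ℝ]
  refine tendsto_integral_filter_of_dominated_convergence
    (fun z => (2 * C) ^ 2 * z ^ (-(1 + 2 * s))) ?_ ?_ ?_ ?_
  · exact Eventually.of_forall fun M =>
      (Measurable.indicator (by fun_prop) measurableSet_Iio).aestronglyMeasurable
  · refine Eventually.of_forall fun M => ae_restrict_of_forall_mem measurableSet_Ioi fun z hzδ => ?_
    have hz : 0 < z := hδ.trans hzδ
    refine (norm_indicator_le_norm_self _ _).trans ?_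
    rw [norm_of_nonneg (by positivity), abs_of_pos hz, rpow_neg hz.le, ← div_eq_mul_inv]
    exact div_le_div_of_nonneg_right (sq_sub_le_of_forall_abs_le hC _ _) (by positivity)
  · exact (integrableOn_Ioi_rpow_of_lt (by linarith) hδ).const_mul _
  · refine ae_restrict_of_forall_mem measurableSet_Ioi fun z _ => ?_
    have hshift : Tendsto (fun M => u (M - z)) atTop (nhds L) :=
      hu_lim.comp (tendsto_atTop_add_const_right _ (-z) tendsto_id)
    have hlim := ((hu_lim.sub hshift).pow 2).div_const (|z| ^ (1 + 2 * s))
    rw [sub_self, zero_pow two_ne_zero, zero_div] at hlim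
    refine hlim.congr' ?_
    filter_upwards [eventually_gt_atTop (z / 2)] with M hM
    have hz : z ∈ Iio (2 * M) := by rw [mem_Iio]; linarith
    simp only [F, indicator_of_mem hz]

theorem stmt3_general (s : ℝ) (hs : s ∈ Set.Ioo (0:ℝ) 1) (u : ℝ → ℝ)
    (hu_cont : Continuous u) (hu_bdd : ∃ C, ∀ x, |u x| ≤ C)
    (hu_C1 : ContDiffOn ℝ 1 u (Set.Ioi 0))
    (b0 : ℝ) (hint : IntegrableOn (deriv u) (Set.Ioi b0))
    (δ : ℝ) (hδ : 0 < δ) :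
    Tendsto (fun M : ℝ => ∫ y in Set.Ioo (-M) (M - δ),
        (u M - u y) ^ 2 / |M - y| ^ (1 + 2 * s)) atTop (nhds 0) := by
  have hderiv : ∀ x ∈ Ioi (max b0 0), HasDerivAt u (deriv u x) x := fun x hx =>
    have hx0 : x ∈ Ioi 0 := (le_max_right b0 0).trans_lt hx
    ((hu_C1.differentiableOn one_ne_zero x hx0).differentiableAt
      (Ioi_mem_nhds hx0)).hasDerivAt
  have hu_lim := tendsto_limUnder_of_hasDerivAt_of_integrableOn_Ioi hderiv
    (hint.mono_set (Ioi_subset_Ioi (le_max_left _ _)))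
  obtain ⟨C, hC⟩ := hu_bdd
  exact tendsto_setIntegral_Ioo_sq_sub_div_rpow hu_cont.measurable hC hu_lim hs.1 hδ

theorem stmt3 (s : ℝ) (hs : s ∈ Set.Ioo (0:ℝ) 1) (u : ℝ → ℝ)
    (hu_cont : Continuous u) (hu_bdd : ∃ C, ∀ x, |u x| ≤ C)
    (hu_zero : ∀ x ≤ (0:ℝ), u x = 0)
    (hu_C1 : ContDiffOn ℝ 1 u (Set.Ioi 0))
    (b0 : ℝ) (hb0 : 0 < b0) (hint : IntegrableOn (deriv u) (Set.Ioi b0))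
    (δ a : ℝ) (hδ : 0 < δ) (ha : 0 < a) :
    Tendsto (fun M : ℝ => ∫ y in Set.Ioo (-M) (M - δ),
        (u M - u y) ^ 2 / |M - y| ^ (1 + 2 * s)) atTop (nhds 0) :=
  stmt3_general s hs u hu_cont hu_bdd hu_C1 b0 hint δ hδ
end

section
/- Let $u: \mathbb{R} \to \mathbb{R}$ be bounded, measurable, with $u=0$ on $(-\infty,0]$, and suppose that $u(x)/x^s$ extends to a $C^1$ function on $[0,\infty)$ with value $\ell_0$ at $0$. Then $\lim_{a \to 0^+} \int_a^{+\infty}\int_0^a \frac{(u(x)-u(y))^2}{|x-y|^{2+2s}}\,dy\,dx = \ell_0^2 \int_1^{+\infty}\int_0^1 \frac{(t^s-\tau^s)^2}{(t-\tau)^{2+2s}}\,d\tau\,dt$. -/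
/-!
Substituting `x = a t`, `y = a τ` turns the integral into the integral over `t > 1`, `0 < τ < 1`
of `((u (a t) - u (a τ)) / a ^ s) ^ 2 / (t - τ) ^ (2 + 2 s)`. Since `u x = x ^ s g x`, this
integrand is `(t ^ s g (a t) - τ ^ s g (a τ)) ^ 2 / (t - τ) ^ (2 + 2 s)`, which tends to
`ℓ0 ^ 2 (t ^ s - τ ^ s) ^ 2 / (t - τ) ^ (2 + 2 s)` as `a → 0⁺`; the theorem is dominated
convergence. For `t > 2` the growth bound `|u x| ≤ M x ^ s` dominates the integrand by a multiple
of `t ^ (-2)`. For `t ≤ 2`, the inequality `t ^ s - τ ^ s ≤ t - τ` (valid as `τ ≤ 1 ≤ t`) and a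
Lipschitz bound for `g` on `[0, 2]` bound the numerator by a multiple of `(t - τ) ^ 2`, and
`(t - τ) ^ (-2 s) ≤ (t - 1) ^ (-s) (1 - τ) ^ (-s)` is integrable because `s < 1`.
-/

open MeasureTheory Real Filter Set Topology
open scoped NNReal

lemma setIntegral_Ioi_Ioo_comp_mul (f : ℝ → ℝ → ℝ) {a : ℝ} (ha : 0 < a) :
    ∫ x in Ioi a, ∫ y in Ioo 0 a, f x y =
      a ^ 2 * ∫ t in Ioi 1, ∫ τ in Ioo 0 1, f (a * t) (a * τ) := by
  have inner (x : ℝ) : ∫ y in Ioo 0 a, f x y = a * ∫ τ in Ioo 0 1, f x (a * τ) := by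
    have := intervalIntegral.mul_integral_comp_mul_left (a := 0) (b := 1) (f := f x) a
    simpa [intervalIntegral.integral_of_le, ha.le, integral_Ioc_eq_integral_Ioo] using this.symm
  have outer := integral_comp_mul_left_Ioi' (fun x => ∫ y in Ioo 0 a, f x y) 1 ha
  rw [mul_one] at outer
  rw [← outer, smul_eq_mul]
  simp only [inner, integral_const_mul]
  ring

lemma rpow_sub_rpow_le_sub {s t τ : ℝ} (hs : s ≤ 1) (hτ₀ : 0 ≤ τ) (hτ₁ : τ ≤ 1) (ht : 1 ≤ t) :
    t ^ s - τ ^ s ≤ t - τ := by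
  linarith [rpow_le_self_of_one_le ht hs, self_le_rpow_of_le_one hτ₀ hτ₁ hs]

lemma sub_rpow_neg_two_mul_le {s t τ : ℝ} (hs : 0 ≤ s) (hτ : τ < 1) (ht : 1 < t) :
    (t - τ) ^ (-(2 * s)) ≤ (t - 1) ^ (-s) * (1 - τ) ^ (-s) := by
  have ht₁ : 0 < t - 1 := by linarith
  have hτ₁ : 0 < 1 - τ := by linarith
  have hprod : ((t - 1) * (1 - τ)) ^ s ≤ (t - τ) ^ (2 * s) := by
    have hsq : (t - 1) * (1 - τ) ≤ (t - τ) ^ 2 := by nlinarith [sq_nonneg (t + τ - 2)]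
    rw [rpow_mul (by linarith), rpow_two]
    exact rpow_le_rpow (mul_pos ht₁ hτ₁).le hsq hs
  rw [rpow_neg (by linarith), rpow_neg ht₁.le, rpow_neg hτ₁.le, ← mul_inv,
    ← mul_rpow ht₁.le hτ₁.le]
  exact inv_anti₀ (rpow_pos_of_pos (mul_pos ht₁ hτ₁) s) hprod

lemma integrable_of_tendsto_of_norm_le {α ι E : Type*} [MeasurableSpace α]
    [NormedAddCommGroup E] {μ : Measure α} {l : Filter ι} [l.NeBot] {F : ι → α → E}
    {f : α → E} {Φ : α → ℝ} (hΦ : Integrable Φ μ) (hf : AEStronglyMeasurable f μ)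
    (hbound : ∀ᵐ z ∂μ, ∀ᶠ i in l, ‖F i z‖ ≤ Φ z)
    (hlim : ∀ᵐ z ∂μ, Tendsto (fun i => F i z) l (𝓝 (f z))) :
    Integrable f μ :=
  hΦ.mono' hf (by filter_upwards [hbound, hlim] with z hb hl using le_of_tendsto hl.norm hb)

noncomputable def dominatingFunction (s c d : ℝ) (z : ℝ × ℝ) : ℝ :=
  c * z.1 ^ (-2 : ℝ) + d * (Ioc 1 2).indicator (fun t => (t - 1) ^ (-s)) z.1 * (1 - z.2) ^ (-s)

lemma integrable_dominatingFunction {s : ℝ} (hs : s < 1) (c d : ℝ) :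
    Integrable (dominatingFunction s c d)
      ((volume.restrict (Ioi 1)).prod (volume.restrict (Ioo 0 1))) := by
  have hrpow : IntervalIntegrable (fun x : ℝ => x ^ (-s)) volume 0 1 :=
    intervalIntegral.intervalIntegrable_rpow' (by linarith)
  have h₁ : IntegrableOn (fun t : ℝ => t ^ (-2 : ℝ)) (Ioi 1) :=
    integrableOn_Ioi_rpow_of_lt (by norm_num) one_pos
  have h₂ : IntegrableOn ((Ioc 1 2).indicator fun t : ℝ => (t - 1) ^ (-s)) (Ioi 1) := by
    have := hrpow.comp_sub_right 1
    norm_num at this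
    exact ((integrable_indicator_iff measurableSet_Ioc).2
      ((intervalIntegrable_iff_integrableOn_Ioc_of_le one_le_two).1 this)).integrableOn
  have h₃ : IntegrableOn (fun τ : ℝ => (1 - τ) ^ (-s)) (Ioo 0 1) := by
    have := (hrpow.comp_sub_left 1).symm
    norm_num at this
    exact ((intervalIntegrable_iff_integrableOn_Ioc_of_le zero_le_one).1 this).mono_set
      Ioo_subset_Ioc_self
  exact ((h₁.const_mul c).comp_fst _).add ((h₂.const_mul d).mul_prod h₃)

noncomputable def rescaledIntegrand (u : ℝ → ℝ) (s a : ℝ) (z : ℝ × ℝ) : ℝ :=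
  ((u (a * z.1) - u (a * z.2)) / a ^ s) ^ 2 / (z.1 - z.2) ^ (2 + 2 * s)

section rescaledIntegrand

variable {u g : ℝ → ℝ} {s a t τ : ℝ}

lemma measurable_rescaledIntegrand (hmeas : Measurable u) :
    Measurable (rescaledIntegrand u s a) := by
  unfold rescaledIntegrand
  fun_prop

lemma rescaledIntegrand_nonneg (hτt : τ ≤ t) : 0 ≤ rescaledIntegrand u s a (t, τ) := by
  unfold rescaledIntegrand
  have := rpow_nonneg (sub_nonneg.2 hτt) (2 + 2 * s)
  positivity

lemma integral_rescaledIntegrand (ha : 0 < a) :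
    ∫ t in Ioi 1, ∫ τ in Ioo 0 1, rescaledIntegrand u s a (t, τ) =
      ∫ x in Ioi a, ∫ y in Ioo 0 a, (u x - u y) ^ 2 / |x - y| ^ (2 + 2 * s) := by
  rw [setIntegral_Ioi_Ioo_comp_mul _ ha, ← integral_const_mul]
  refine setIntegral_congr_fun measurableSet_Ioi fun t ht => ?_
  rw [← integral_const_mul]
  refine setIntegral_congr_fun measurableSet_Ioo fun τ hτ => ?_
  have htτ : 0 < t - τ := by linarith [hτ.2, mem_Ioi.1 ht]
  rw [rescaledIntegrand, ← mul_sub, abs_of_pos (mul_pos ha htτ), mul_rpow ha.le htτ.le,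
    rpow_add ha, mul_comm 2 s, rpow_mul ha.le, rpow_two, rpow_two]
  have := (rpow_pos_of_pos ha s).ne'
  field_simp

lemma rescaledIntegrand_le_of_two_mul_le {M : ℝ} (hM : ∀ x > 0, |u x| ≤ M * x ^ s)
    (hs : 0 ≤ s) (ha : 0 < a) (hτ : 0 < τ) (ht : 2 * τ ≤ t) :
    rescaledIntegrand u s a (t, τ) ≤ 4 * 2 ^ (2 + 2 * s) * M ^ 2 * t ^ (-2 : ℝ) := by
  have ht₀ : 0 < t := by linarith
  have has := rpow_pos_of_pos ha s
  have hM₀ : 0 ≤ M :=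
    nonneg_of_mul_nonneg_left ((abs_nonneg _).trans (hM t ht₀)) (rpow_pos_of_pos ht₀ s)
  have hnum : |(u (a * t) - u (a * τ)) / a ^ s| ≤ 2 * M * t ^ s := by
    have hτt : τ ^ s ≤ t ^ s := rpow_le_rpow hτ.le (by linarith) hs
    have h₁ := hM (a * t) (mul_pos ha ht₀)
    have h₂ := hM (a * τ) (mul_pos ha hτ)
    rw [mul_rpow ha.le ht₀.le] at h₁
    rw [mul_rpow ha.le hτ.le] at h₂
    rw [abs_div, abs_of_pos has, div_le_iff₀ has]
    calc |u (a * t) - u (a * τ)| ≤ |u (a * t)| + |u (a * τ)| := abs_sub _ _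
      _ ≤ 2 * M * t ^ s * a ^ s := by
          nlinarith [mul_le_mul_of_nonneg_left hτt (mul_nonneg hM₀ has.le)]
  have hden : t ^ (2 + 2 * s) / 2 ^ (2 + 2 * s) ≤ (t - τ) ^ (2 + 2 * s) := by
    rw [← div_rpow ht₀.le zero_le_two]
    exact rpow_le_rpow (by positivity) (by linarith) (by linarith)
  calc rescaledIntegrand u s a (t, τ)
      ≤ (2 * M * t ^ s) ^ 2 / (t ^ (2 + 2 * s) / 2 ^ (2 + 2 * s)) :=
        div_le_div₀ (by positivity) (sq_le_sq' (abs_le.1 hnum).1 (abs_le.1 hnum).2)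
          (by positivity) hden
    _ = 4 * 2 ^ (2 + 2 * s) * M ^ 2 * t ^ (-2 : ℝ) := by
        rw [rpow_add ht₀, mul_comm 2 s, rpow_mul ht₀.le, rpow_two, rpow_two, rpow_neg ht₀.le,
          rpow_two]
        have := (rpow_pos_of_pos ht₀ s).ne'
        field_simp
        ring

lemma abs_sub_div_rpow_le_of_le_two {G : ℝ} {K : ℝ≥0} (hu : ∀ x > 0, u x = x ^ s * g x)
    (hG : ∀ x ∈ Icc 0 2, |g x| ≤ G) (hK : LipschitzOnWith K g (Icc 0 2)) (hs₀ : 0 ≤ s)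
    (hs₁ : s ≤ 1) (ha₀ : 0 < a) (ha₁ : a ≤ 1) (hτ₀ : 0 < τ) (hτ₁ : τ < 1) (ht₁ : 1 < t)
    (ht₂ : t ≤ 2) :
    |(u (a * t) - u (a * τ)) / a ^ s| ≤ (G + K) * (t - τ) := by
  have ht₀ : 0 < t := by linarith
  have htτ : 0 < t - τ := by linarith
  have hat : a * t ∈ Icc 0 2 := ⟨by positivity, by nlinarith⟩
  have haτ : a * τ ∈ Icc 0 2 := ⟨by positivity, by nlinarith⟩
  have hsplit : (u (a * t) - u (a * τ)) / a ^ s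
      = (t ^ s - τ ^ s) * g (a * t) + τ ^ s * (g (a * t) - g (a * τ)) := by
    rw [hu _ (mul_pos ha₀ ht₀), hu _ (mul_pos ha₀ hτ₀), mul_rpow ha₀.le ht₀.le,
      mul_rpow ha₀.le hτ₀.le]
    field_simp
    ring
  have hlip : |g (a * t) - g (a * τ)| ≤ K * (t - τ) := by
    have := hK.dist_le_mul _ hat _ haτ
    rw [dist_eq_norm, dist_eq_norm, norm_eq_abs, norm_eq_abs, ← mul_sub,
      abs_of_pos (mul_pos ha₀ htτ)] at this
    exact this.trans (mul_le_mul_of_nonneg_left (mul_le_of_le_one_left htτ.le ha₁) K.2)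
  have hst := rpow_sub_rpow_le_sub hs₁ hτ₀.le hτ₁.le ht₁.le
  have hτs : τ ^ s ≤ 1 := rpow_le_one hτ₀.le hτ₁.le hs₀
  have hmono : 0 ≤ t ^ s - τ ^ s := sub_nonneg.2 (rpow_le_rpow hτ₀.le (by linarith) hs₀)
  rw [hsplit]
  calc |(t ^ s - τ ^ s) * g (a * t) + τ ^ s * (g (a * t) - g (a * τ))|
      ≤ (t ^ s - τ ^ s) * |g (a * t)| + τ ^ s * |g (a * t) - g (a * τ)| := by
        refine (abs_add_le _ _).trans_eq ?_
        rw [abs_mul, abs_mul, abs_of_nonneg hmono, abs_of_nonneg (rpow_nonneg hτ₀.le s)]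
    _ ≤ (t - τ) * G + 1 * (K * (t - τ)) := by
        gcongr
        exact hG _ hat
    _ = (G + K) * (t - τ) := by ring

lemma rescaledIntegrand_le_of_le_two {G : ℝ} {K : ℝ≥0} (hu : ∀ x > 0, u x = x ^ s * g x)
    (hG : ∀ x ∈ Icc 0 2, |g x| ≤ G) (hK : LipschitzOnWith K g (Icc 0 2)) (hs₀ : 0 ≤ s)
    (hs₁ : s ≤ 1) (ha₀ : 0 < a) (ha₁ : a ≤ 1) (hτ₀ : 0 < τ) (hτ₁ : τ < 1) (ht₁ : 1 < t)
    (ht₂ : t ≤ 2) :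
    rescaledIntegrand u s a (t, τ) ≤ (G + K) ^ 2 * ((t - 1) ^ (-s) * (1 - τ) ^ (-s)) := by
  have htτ : 0 < t - τ := by linarith
  have hnum := abs_sub_div_rpow_le_of_le_two hu hG hK hs₀ hs₁ ha₀ ha₁ hτ₀ hτ₁ ht₁ ht₂
  calc rescaledIntegrand u s a (t, τ)
      ≤ ((G + K) * (t - τ)) ^ 2 / (t - τ) ^ (2 + 2 * s) :=
        div_le_div_of_nonneg_right (sq_le_sq' (abs_le.1 hnum).1 (abs_le.1 hnum).2)
          (rpow_nonneg htτ.le _)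
    _ = (G + K) ^ 2 * (t - τ) ^ (-(2 * s)) := by
        rw [rpow_add htτ, rpow_neg htτ.le, rpow_two]
        have := (rpow_pos_of_pos htτ (2 * s)).ne'
        field_simp
    _ ≤ (G + K) ^ 2 * ((t - 1) ^ (-s) * (1 - τ) ^ (-s)) := by
        gcongr
        exact sub_rpow_neg_two_mul_le hs₀ hτ₁ ht₁

lemma tendsto_rescaledIntegrand {ℓ : ℝ} (hu : ∀ x > 0, u x = x ^ s * g x)
    (hg : Tendsto g (𝓝[>] 0) (𝓝 ℓ)) (ht : 0 < t) (hτ : 0 < τ) :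
    Tendsto (fun a => rescaledIntegrand u s a (t, τ)) (𝓝[>] 0)
      (𝓝 (ℓ ^ 2 * ((t ^ s - τ ^ s) ^ 2 / (t - τ) ^ (2 + 2 * s)))) := by
  have hg_mul {c : ℝ} (hc : 0 < c) : Tendsto (fun a => g (a * c)) (𝓝[>] 0) (𝓝 ℓ) := by
    refine hg.comp (tendsto_nhdsWithin_iff.2 ⟨?_, ?_⟩)
    · simpa using ((continuous_mul_const c).tendsto 0).mono_left nhdsWithin_le_nhds
    · filter_upwards [self_mem_nhdsWithin] with a ha using mul_pos ha hc
  have hlim := ((((tendsto_const_nhds (x := t ^ s)).mul (hg_mul ht)).sub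
    ((tendsto_const_nhds (x := τ ^ s)).mul (hg_mul hτ))).pow 2).div_const ((t - τ) ^ (2 + 2 * s))
  rw [show (t ^ s * ℓ - τ ^ s * ℓ) ^ 2 / (t - τ) ^ (2 + 2 * s)
      = ℓ ^ 2 * ((t ^ s - τ ^ s) ^ 2 / (t - τ) ^ (2 + 2 * s)) by ring] at hlim
  refine hlim.congr' ?_
  filter_upwards [self_mem_nhdsWithin] with a (ha : 0 < a)
  rw [rescaledIntegrand, hu _ (mul_pos ha ht), hu _ (mul_pos ha hτ), mul_rpow ha.le ht.le,
    mul_rpow ha.le hτ.le]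
  have := (rpow_pos_of_pos ha s).ne'
  field_simp

lemma rescaledIntegrand_le_dominatingFunction {M G : ℝ} {K : ℝ≥0}
    (hM : ∀ x > 0, |u x| ≤ M * x ^ s) (hu : ∀ x > 0, u x = x ^ s * g x)
    (hG : ∀ x ∈ Icc 0 2, |g x| ≤ G) (hK : LipschitzOnWith K g (Icc 0 2)) (hs₀ : 0 ≤ s)
    (hs₁ : s ≤ 1) (ha₀ : 0 < a) (ha₁ : a ≤ 1) (hτ₀ : 0 < τ) (hτ₁ : τ < 1) (ht : 1 < t) :
    rescaledIntegrand u s a (t, τ) ≤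
      dominatingFunction s (4 * 2 ^ (2 + 2 * s) * M ^ 2) ((G + K) ^ 2) (t, τ) := by
  unfold dominatingFunction
  by_cases ht₂ : t ≤ 2
  · have hfar : 0 ≤ 4 * 2 ^ (2 + 2 * s) * M ^ 2 * t ^ (-2 : ℝ) := by
      have := rpow_nonneg (zero_le_two (α := ℝ)) (2 + 2 * s)
      have := rpow_nonneg (zero_le_one.trans ht.le) (-2)
      positivity
    rw [indicator_of_mem (show t ∈ Ioc 1 2 from ⟨ht, ht₂⟩), mul_assoc]
    linarith [rescaledIntegrand_le_of_le_two hu hG hK hs₀ hs₁ ha₀ ha₁ hτ₀ hτ₁ ht ht₂]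
  · rw [indicator_of_notMem fun h => ht₂ h.2, mul_zero, zero_mul, add_zero]
    exact rescaledIntegrand_le_of_two_mul_le hM hs₀ ha₀ hτ₀ (by linarith)

lemma abs_le_max_mul_rpow {C G : ℝ} (hs : 0 ≤ s) (hC : ∀ x, |u x| ≤ C)
    (hu : ∀ x > 0, u x = x ^ s * g x) (hG : ∀ x ∈ Ioc 0 1, |g x| ≤ G) :
    ∀ x > 0, |u x| ≤ max G C * x ^ s := by
  intro x hx
  rcases le_or_gt x 1 with hx₁ | hx₁
  · rw [hu x hx, abs_mul, abs_of_pos (rpow_pos_of_pos hx s), mul_comm]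
    exact mul_le_mul_of_nonneg_right ((hG x ⟨hx, hx₁⟩).trans (le_max_left _ _))
      (rpow_nonneg hx.le s)
  · calc |u x| ≤ max G C := (hC x).trans (le_max_right _ _)
      _ ≤ max G C * x ^ s := le_mul_of_one_le_right ((abs_nonneg _).trans
          ((hC x).trans (le_max_right _ _))) (one_le_rpow hx₁.le hs)

theorem tendsto_integral_rescaledIntegrand {ℓ M G : ℝ} {K : ℝ≥0} (hs₀ : 0 ≤ s) (hs₁ : s < 1)
    (hmeas : Measurable u) (hu : ∀ x > 0, u x = x ^ s * g x) (hg : Tendsto g (𝓝[>] 0) (𝓝 ℓ))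
    (hM : ∀ x > 0, |u x| ≤ M * x ^ s) (hG : ∀ x ∈ Icc 0 2, |g x| ≤ G)
    (hK : LipschitzOnWith K g (Icc 0 2)) :
    Tendsto (fun a => ∫ t in Ioi 1, ∫ τ in Ioo 0 1, rescaledIntegrand u s a (t, τ)) (𝓝[>] 0)
      (𝓝 (ℓ ^ 2 * ∫ t in Ioi 1, ∫ τ in Ioo 0 1, (t ^ s - τ ^ s) ^ 2 / (t - τ) ^ (2 + 2 * s))) := by
  set μ := (volume.restrict (Ioi (1 : ℝ))).prod (volume.restrict (Ioo (0 : ℝ) 1))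
  set Φ := dominatingFunction s (4 * 2 ^ (2 + 2 * s) * M ^ 2) ((G + K) ^ 2)
  set ψ : ℝ × ℝ → ℝ := fun z => ℓ ^ 2 * ((z.1 ^ s - z.2 ^ s) ^ 2 / (z.1 - z.2) ^ (2 + 2 * s))
  have hΦ : Integrable Φ μ := integrable_dominatingFunction hs₁ _ _
  have hΩ : ∀ᵐ z ∂μ, z ∈ Ioi 1 ×ˢ Ioo 0 1 := by
    simp only [μ, Measure.prod_restrict]
    exact ae_restrict_mem (measurableSet_Ioi.prod measurableSet_Ioo)
  have hsmall : Ioc (0 : ℝ) 1 ∈ 𝓝[>] 0 := Ioc_mem_nhdsGT one_pos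
  have hbound : ∀ a ∈ Ioc (0 : ℝ) 1, ∀ z ∈ Ioi 1 ×ˢ Ioo 0 1,
      ‖rescaledIntegrand u s a z‖ ≤ Φ z := by
    rintro a ⟨ha₀, ha₁⟩ ⟨t, τ⟩ ⟨ht, hτ₀, hτ₁⟩
    rw [norm_of_nonneg (rescaledIntegrand_nonneg (by linarith [mem_Ioi.1 ht]))]
    exact rescaledIntegrand_le_dominatingFunction hM hu hG hK hs₀ hs₁.le ha₀ ha₁ hτ₀ hτ₁ ht
  have hbound_ae : ∀ a ∈ Ioc (0 : ℝ) 1, ∀ᵐ z ∂μ, ‖rescaledIntegrand u s a z‖ ≤ Φ z :=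
    fun a ha => by filter_upwards [hΩ] with z hz using hbound a ha z hz
  have hlim : ∀ᵐ z ∂μ, Tendsto (fun a => rescaledIntegrand u s a z) (𝓝[>] 0) (𝓝 (ψ z)) := by
    filter_upwards [hΩ] with ⟨t, τ⟩ ⟨ht, hτ₀, _⟩
    exact tendsto_rescaledIntegrand hu hg (zero_lt_one.trans ht) hτ₀
  have hψ : Integrable ψ μ :=
    integrable_of_tendsto_of_norm_le hΦ (by fun_prop : Measurable ψ).aestronglyMeasurable
      (by filter_upwards [hΩ] with z hz using mem_of_superset hsmall fun a ha => hbound a ha z hz)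
      hlim
  have hDCT := tendsto_integral_filter_of_dominated_convergence Φ
    (Eventually.of_forall fun a => (measurable_rescaledIntegrand hmeas).aestronglyMeasurable)
    (mem_of_superset hsmall hbound_ae) hΦ hlim
  have hψ_iterated : ∫ z, ψ z ∂μ =
      ℓ ^ 2 * ∫ t in Ioi 1, ∫ τ in Ioo 0 1, (t ^ s - τ ^ s) ^ 2 / (t - τ) ^ (2 + 2 * s) := by
    calc ∫ z, ψ z ∂μ = ∫ t in Ioi 1, ∫ τ in Ioo 0 1, ψ (t, τ) :=
          (integral_integral (f := fun t τ => ψ (t, τ)) hψ).symm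
      _ = _ := by simp only [ψ, integral_const_mul]
  rw [hψ_iterated] at hDCT
  refine hDCT.congr' ?_
  filter_upwards [hsmall] with a ha
  exact (integral_integral (f := fun t τ => rescaledIntegrand u s a (t, τ))
    (hΦ.mono' (measurable_rescaledIntegrand hmeas).aestronglyMeasurable (hbound_ae a ha))).symm

end rescaledIntegrand

theorem stmt4_general (s : ℝ) (hs : s ∈ Set.Ioo (0:ℝ) 1) (u : ℝ → ℝ) (ℓ0 : ℝ)
    (hmeas : Measurable u) (hbdd : ∃ C, ∀ x, |u x| ≤ C)
    (hext : ∃ g : ℝ → ℝ, ContDiffOn ℝ 1 g (Set.Ici 0) ∧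
      (∀ x > (0:ℝ), g x = u x / x ^ s) ∧ g 0 = ℓ0) :
    Tendsto (fun a : ℝ => ∫ x in Set.Ioi a, ∫ y in Set.Ioo (0:ℝ) a,
        (u x - u y) ^ 2 / |x - y| ^ (2 + 2 * s))
      (nhdsWithin 0 (Set.Ioi 0))
      (nhds (ℓ0 ^ 2 * ∫ t in Set.Ioi (1:ℝ), ∫ τ in Set.Ioo (0:ℝ) 1,
        (t ^ s - τ ^ s) ^ 2 / (t - τ) ^ (2 + 2 * s))) := by
  obtain ⟨hs₀, hs₁⟩ := hs
  obtain ⟨C, hC⟩ := hbdd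
  obtain ⟨g, hg, hgu, rfl⟩ := hext
  have hu : ∀ x > 0, u x = x ^ s * g x := fun x hx => by
    rw [hgu x hx, mul_div_cancel₀ _ (rpow_pos_of_pos hx s).ne']
  have hg₂ : ContDiffOn ℝ 1 g (Icc 0 2) := hg.mono Icc_subset_Ici_self
  obtain ⟨G, hG⟩ := isCompact_Icc.exists_bound_of_continuousOn hg₂.continuousOn
  simp only [norm_eq_abs] at hG
  obtain ⟨K, hK⟩ := hg₂.exists_lipschitzOnWith one_ne_zero (convex_Icc 0 2) isCompact_Icc
  have hM := abs_le_max_mul_rpow hs₀.le hC hu fun x hx => hG x ⟨hx.1.le, hx.2.trans one_le_two⟩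
  have hg₀ : Tendsto g (𝓝[>] 0) (𝓝 (g 0)) :=
    (hg.continuousOn.continuousWithinAt self_mem_Ici).tendsto.mono_left
      (nhdsWithin_mono _ Ioi_subset_Ici_self)
  refine (tendsto_integral_rescaledIntegrand hs₀.le hs₁ hmeas hu hg₀ hM hG hK).congr' ?_
  filter_upwards [self_mem_nhdsWithin] with a ha using integral_rescaledIntegrand ha

theorem stmt4 (s : ℝ) (hs : s ∈ Set.Ioo (0:ℝ) 1) (u : ℝ → ℝ) (ℓ0 : ℝ)
    (hmeas : Measurable u) (hbdd : ∃ C, ∀ x, |u x| ≤ C)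
    (hzero : ∀ x ≤ (0:ℝ), u x = 0)
    (hext : ∃ g : ℝ → ℝ, ContDiffOn ℝ 1 g (Set.Ici 0) ∧
      (∀ x > (0:ℝ), g x = u x / x ^ s) ∧ g 0 = ℓ0) :
    Tendsto (fun a : ℝ => ∫ x in Set.Ioi a, ∫ y in Set.Ioo (0:ℝ) a,
        (u x - u y) ^ 2 / |x - y| ^ (2 + 2 * s))
      (nhdsWithin 0 (Set.Ioi 0))
      (nhds (ℓ0 ^ 2 * ∫ t in Set.Ioi (1:ℝ), ∫ τ in Set.Ioo (0:ℝ) 1,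
        (t ^ s - τ ^ s) ^ 2 / (t - τ) ^ (2 + 2 * s))) :=
  stmt4_general s hs u ℓ0 hmeas hbdd hext
end

section
/- For $s \in (0,1)$, the double integral $\int_1^{+\infty}\int_0^1 \frac{(t^s-\tau^s)^2}{(t-\tau)^{2+2s}}\,d\tau\,dt$ is finite. -/
open MeasureTheory Real Set

/-! For `0 < τ < t` and `0 < s ≤ 1`, subadditivity `t ^ s - τ ^ s ≤ (t - τ) ^ s` and the tangent
bound `t ^ s - τ ^ s ≤ s τ ^ (s - 1) (t - τ)` of the concave map `x ↦ x ^ s` bound the integrand by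
`s τ ^ (s - 1) (t - τ) ^ (-(1 + s))`. For `t ≤ 2` split the singular factor as
`(t - 1) ^ (-(1 + s) / 2) (1 - τ) ^ (-(1 + s) / 2)`, both exponents exceeding `-1` because `s < 1`;
for `t > 2` use `(t - τ) ^ (-(1 + s)) ≤ (t - 1) ^ (-(1 + s))`, integrable at infinity. Either way
the integrand is dominated by a product of integrable functions of `t` and of `τ`. -/

theorem IntegrableOn.prod_of_norm_le_mul {α β E : Type*} [MeasurableSpace α] [MeasurableSpace β]
    [NormedAddCommGroup E] {μ : Measure α} {ν : Measure β} [SFinite μ] [SFinite ν]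
    {s : Set α} {t : Set β} {f : α × β → E} {g : α → ℝ} {h : β → ℝ}
    (hf : AEStronglyMeasurable f ((μ.prod ν).restrict (s ×ˢ t)))
    (hg : IntegrableOn g s μ) (hh : IntegrableOn h t ν) (hs : MeasurableSet s)
    (ht : MeasurableSet t) (hle : ∀ x ∈ s, ∀ y ∈ t, ‖f (x, y)‖ ≤ g x * h y) :
    IntegrableOn f (s ×ˢ t) (μ.prod ν) := by
  have hgh : IntegrableOn (fun p : α × β => g p.1 * h p.2) (s ×ˢ t) (μ.prod ν) := by
    rw [IntegrableOn, ← Measure.prod_restrict]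
    exact hg.mul_prod hh
  exact hgh.mono' hf (ae_restrict_of_forall_mem (hs.prod ht) fun p hp => hle _ hp.1 _ hp.2)

theorem Real.rpow_sub_rpow_le_sub_rpow {x y s : ℝ} (hy : 0 ≤ y) (hyx : y ≤ x) (hs0 : 0 ≤ s)
    (hs1 : s ≤ 1) : x ^ s - y ^ s ≤ (x - y) ^ s := by
  have := rpow_add_le_add_rpow (sub_nonneg.2 hyx) hy hs0 hs1
  rw [sub_add_cancel] at this
  linarith

theorem Real.rpow_sub_rpow_le_mul_sub {x y s : ℝ} (hx : 0 ≤ x) (hy : 0 < y) (hs0 : 0 ≤ s)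
    (hs1 : s ≤ 1) : x ^ s - y ^ s ≤ s * y ^ (s - 1) * (x - y) := by
  have h := rpow_one_add_le_one_add_mul_self (s := x / y - 1)
    (by linarith [div_nonneg hx hy.le]) hs0 hs1
  rw [add_sub_cancel, div_rpow hx hy.le, div_le_iff₀ (rpow_pos_of_pos hy s)] at h
  have : (1 + s * (x / y - 1)) * y ^ s = y ^ s + s * (y ^ s / y) * (x - y) := by
    field_simp
  rw [rpow_sub_one hy.ne']
  linarith

theorem integrableOn_rpow_mul_one_sub_rpow {a b : ℝ} (ha : -1 < a) (hb : -1 < b) :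
    IntegrableOn (fun x : ℝ => x ^ a * (1 - x) ^ b) (Ioo 0 1) := by
  have near_zero : ∀ {a b : ℝ}, -1 < a →
      IntervalIntegrable (fun x : ℝ => x ^ a * (1 - x) ^ b) volume 0 (1 / 2) := by
    intro a b ha
    refine (intervalIntegral.intervalIntegrable_rpow' ha).mul_continuousOn
      (ContinuousOn.rpow_const (by fun_prop) fun x hx => Or.inl ?_)
    rw [uIcc_of_le (by norm_num)] at hx
    linarith [hx.2]
  have near_one : IntervalIntegrable (fun x : ℝ => x ^ a * (1 - x) ^ b) volume (1 / 2) 1 := by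
    convert ((near_zero hb (b := a)).comp_sub_left 1).symm using 1 <;> norm_num [mul_comm]
  rw [← intervalIntegrable_iff_integrableOn_Ioo_of_le zero_le_one]
  exact (near_zero ha).trans near_one

theorem integrableOn_sub_rpow_Ioc {a b r : ℝ} (hr : -1 < r) :
    IntegrableOn (fun t : ℝ => (t - a) ^ r) (Ioc a b) := by
  have := (intervalIntegral.intervalIntegrable_rpow' hr (a := 0) (b := b - a)).comp_sub_right a
  rw [zero_add, sub_add_cancel] at this
  exact this.def'.mono_set Ioc_subset_uIoc

theorem integrableOn_sub_rpow_Ioi {a c r : ℝ} (hr : r < -1) (hac : a < c) :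
    IntegrableOn (fun t : ℝ => (t - a) ^ r) (Ioi c) := by
  have := integrableOn_Ioi_rpow_of_lt hr (sub_pos.2 hac)
  rw [← (measurePreserving_sub_right volume a).integrableOn_comp_preimage
    (measurableEmbedding_subRight a), preimage_sub_const_Ioi, sub_add_cancel] at this
  exact this

noncomputable def rpowDiffKernel (s : ℝ) (p : ℝ × ℝ) : ℝ :=
  (p.1 ^ s - p.2 ^ s) ^ 2 / (p.1 - p.2) ^ (2 + 2 * s)

theorem measurable_rpowDiffKernel (s : ℝ) : Measurable (rpowDiffKernel s) := by
  unfold rpowDiffKernel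
  fun_prop

theorem norm_rpowDiffKernel_le {s t τ : ℝ} (hs0 : 0 ≤ s) (hs1 : s ≤ 1) (hτ : 0 < τ)
    (hτt : τ < t) : ‖rpowDiffKernel s (t, τ)‖ ≤ s * τ ^ (s - 1) * (t - τ) ^ (-(1 + s)) := by
  have hd : 0 < t - τ := sub_pos.2 hτt
  have hnum : (t ^ s - τ ^ s) ^ 2 ≤ (t - τ) ^ s * (s * τ ^ (s - 1) * (t - τ)) := by
    rw [sq]
    exact mul_le_mul (rpow_sub_rpow_le_sub_rpow hτ.le hτt.le hs0 hs1)
      (rpow_sub_rpow_le_mul_sub (hτ.trans hτt).le hτ hs0 hs1)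
      (sub_nonneg.2 (rpow_le_rpow hτ.le hτt.le hs0)) (rpow_nonneg hd.le s)
  have hexp : (t - τ) ^ (-(1 + s)) = (t - τ) ^ s * (t - τ) / (t - τ) ^ (2 + 2 * s) := by
    rw [← rpow_add_one hd.ne', ← rpow_sub hd]
    ring_nf
  rw [norm_of_nonneg (by unfold rpowDiffKernel; positivity), hexp, mul_div_assoc']
  unfold rpowDiffKernel
  gcongr
  linarith

theorem integrableOn_rpowDiffKernel_Ioc_prod_Ioo {s : ℝ} (hs0 : 0 < s) (hs1 : s < 1) :
    IntegrableOn (rpowDiffKernel s) (Ioc 1 2 ×ˢ Ioo 0 1) := by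
  set q := (1 + s) / 2 with hq
  refine IntegrableOn.prod_of_norm_le_mul (g := fun t => s * (t - 1) ^ (-q))
    (h := fun τ => τ ^ (s - 1) * (1 - τ) ^ (-q)) (measurable_rpowDiffKernel s).aestronglyMeasurable
    ((integrableOn_sub_rpow_Ioc (by linarith)).const_mul s)
    (integrableOn_rpow_mul_one_sub_rpow (by linarith) (by linarith))
    measurableSet_Ioc measurableSet_Ioo ?_
  rintro t ⟨ht1, -⟩ τ ⟨hτ0, hτ1⟩
  have hsplit : (t - τ) ^ (-(1 + s)) = (t - τ) ^ (-q) * (t - τ) ^ (-q) := by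
    rw [← rpow_add (by linarith), hq]
    ring_nf
  calc ‖rpowDiffKernel s (t, τ)‖ ≤ s * τ ^ (s - 1) * (t - τ) ^ (-(1 + s)) :=
        norm_rpowDiffKernel_le hs0.le hs1.le hτ0 (by linarith)
    _ ≤ s * τ ^ (s - 1) * ((t - 1) ^ (-q) * (1 - τ) ^ (-q)) := by
        rw [hsplit]
        refine mul_le_mul_of_nonneg_left (mul_le_mul ?_ ?_ (rpow_nonneg (by linarith) _)
          (rpow_nonneg (by linarith) _)) (by positivity)
        all_goals exact rpow_le_rpow_of_nonpos (by linarith) (by linarith) (by linarith)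
    _ = s * (t - 1) ^ (-q) * (τ ^ (s - 1) * (1 - τ) ^ (-q)) := by ring

theorem integrableOn_rpowDiffKernel_Ioi_prod_Ioo {s : ℝ} (hs0 : 0 < s) (hs1 : s ≤ 1) :
    IntegrableOn (rpowDiffKernel s) (Ioi 2 ×ˢ Ioo 0 1) := by
  refine IntegrableOn.prod_of_norm_le_mul (g := fun t => s * (t - 1) ^ (-(1 + s)))
    (h := fun τ => τ ^ (s - 1)) (measurable_rpowDiffKernel s).aestronglyMeasurable
    ((integrableOn_sub_rpow_Ioi (by linarith) one_lt_two).const_mul s)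
    ((intervalIntegral.integrableOn_Ioo_rpow_iff zero_lt_one).2 (by linarith))
    measurableSet_Ioi measurableSet_Ioo ?_
  rintro t (ht : 2 < t) τ ⟨hτ0, hτ1⟩
  calc ‖rpowDiffKernel s (t, τ)‖ ≤ s * τ ^ (s - 1) * (t - τ) ^ (-(1 + s)) :=
        norm_rpowDiffKernel_le hs0.le hs1 hτ0 (by linarith)
    _ ≤ s * τ ^ (s - 1) * (t - 1) ^ (-(1 + s)) :=
        mul_le_mul_of_nonneg_left
          (rpow_le_rpow_of_nonpos (by linarith) (by linarith) (by linarith)) (by positivity)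
    _ = s * (t - 1) ^ (-(1 + s)) * τ ^ (s - 1) := by ring

theorem stmt5 (s : ℝ) (hs : s ∈ Set.Ioo (0:ℝ) 1) :
    IntegrableOn (fun p : ℝ × ℝ => (p.1 ^ s - p.2 ^ s) ^ 2 / (p.1 - p.2) ^ (2 + 2 * s))
      (Set.Ioi (1:ℝ) ×ˢ Set.Ioo (0:ℝ) 1) := by
  obtain ⟨hs0, hs1⟩ := hs
  rw [← Ioc_union_Ioi_eq_Ioi one_le_two, union_prod]
  exact (integrableOn_rpowDiffKernel_Ioc_prod_Ioo hs0 hs1).union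
    (integrableOn_rpowDiffKernel_Ioi_prod_Ioo hs0 hs1.le)
end

section
/- For $s \in (0,1)$, the integral $\int_{-1}^1 \frac{((t+1)^s-1)^2}{|t|^{1+2s}}\,dt$ is finite. -/
open MeasureTheory Real

/-! Since `x ↦ x ^ s` is monotone in the exponent on either side of `x = 1`, we have
`|(t + 1) ^ s - 1| ≤ |t|`, so the integrand is at most `|t| ^ (1 - 2 * s)`, which is integrable
near `0` because `1 - 2 * s > -1`. -/

theorem abs_rpow_sub_one_le_abs_sub_one {x y : ℝ} (hx : 0 ≤ x) (hy₀ : 0 ≤ y) (hy₁ : y ≤ 1) :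
    |x ^ y - 1| ≤ |x - 1| := by
  rcases le_total x 1 with hx₁ | hx₁
  · have h_le_one : x ^ y ≤ 1 := rpow_le_one hx hx₁ hy₀
    have h_self_le : x ≤ x ^ y := self_le_rpow_of_le_one hx hx₁ hy₁
    rw [abs_of_nonpos (by linarith), abs_of_nonpos (by linarith)]
    linarith
  · have h_one_le : 1 ≤ x ^ y := one_le_rpow hx₁ hy₀
    have h_le_self : x ^ y ≤ x := rpow_le_self_of_one_le hx₁ hy₁
    rw [abs_of_nonneg (by linarith), abs_of_nonneg (by linarith)]
    linarith

theorem sq_div_abs_rpow_le {a t : ℝ} (p : ℝ) (h : |a| ≤ |t|) :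
    a ^ 2 / |t| ^ p ≤ |t| ^ (2 - p) := by
  rcases eq_or_ne t 0 with rfl | ht
  · rw [abs_zero, abs_nonpos_iff] at h
    simp [h, rpow_nonneg]
  have ht' : 0 < |t| := abs_pos.mpr ht
  rw [div_le_iff₀ (rpow_pos_of_pos ht' p), ← rpow_add ht', sub_add_cancel, ← sq_abs]
  exact_mod_cast pow_le_pow_left₀ (abs_nonneg a) h 2

theorem stmt6 (s : ℝ) (hs : s ∈ Set.Ioo (0:ℝ) 1) :
    IntegrableOn (fun t : ℝ => ((t + 1) ^ s - 1) ^ 2 / |t| ^ (1 + 2 * s))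
      (Set.Ioo (-1 : ℝ) 1) := by
  obtain ⟨hs₀, hs₁⟩ := hs
  have h_ball : Metric.ball (0 : ℝ) 1 = Set.Ioo (-1) 1 := by norm_num [Real.ball_eq_Ioo]
  rw [← h_ball]
  refine integrableOn_ball_of_norm_le_rpow (μ := volume) (C := 1) (α := 2 * s - 1)
    (by simp) (by rw [Module.finrank_self, Nat.cast_one]; linarith) ?_ (by fun_prop : Measurable _).aestronglyMeasurable
  filter_upwards [ae_restrict_mem Metric.isOpen_ball.measurableSet] with t ht
  rw [h_ball] at ht
  have h_num : |(t + 1) ^ s - 1| ≤ |t| := by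
    simpa using abs_rpow_sub_one_le_abs_sub_one (x := t + 1) (by linarith [ht.1]) hs₀.le hs₁.le
  rw [norm_of_nonneg (by positivity), one_mul, norm_eq_abs]
  convert sq_div_abs_rpow_le (1 + 2 * s) h_num using 2
  ring
end

section
/- Let $0 < \sigma_1 \leq \sigma_2 < 1$, $K > 0$, and for complex $s = \sigma + i\omega$ with $\sigma_1 \leq \sigma \leq \sigma_2$, $|\omega| \leq K$, define $F_1(s) = \int_{-1}^1 \frac{((t+1)^s-1)^2}{|t|^{1+2s}}\,dt$ with $x^s := x^\sigma e^{i\omega \log x}$ for $x > 0$. Then this integral converges absolutely and uniformly on the rectangle, and $F_1$ is analytic on the open strip $0 < \mathrm{Re}(s) < 1$. -/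
/-!
For `x = 1 + t` the bound `‖x ^ s - 1‖ ≤ (2‖s‖ + 4) |x - 1|` holds (mean value theorem for
`x ≥ 1/2`, trivially below), so the integrand is dominated by `C |t| ^ (1 - 2 Re s)`, which is
integrable on `(-1, 1)` because `Re s < 1`; this gives the uniform bound. Holomorphy follows by
differentiating under the integral sign: the integrand is entire in `s`, and Cauchy's estimate on a
slightly larger disc converts the domination of the integrand into one of its `s`-derivative.
-/

open MeasureTheory Real Complex Set Metric Filter Topology

section ParametricHolomorphic

variable {α E : Type*} [MeasurableSpace α] {μ : Measure α}
  [NormedAddCommGroup E] [NormedSpace ℂ E]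

theorem aestronglyMeasurable_deriv_of_differentiableAt {F : ℂ → α → E} {z₀ : ℂ}
    (hF_meas : ∀ z, AEStronglyMeasurable (F z) μ)
    (h_diff : ∀ᵐ t ∂μ, DifferentiableAt ℂ (F · t) z₀) :
    AEStronglyMeasurable (fun t => deriv (F · t) z₀) μ :=
  aestronglyMeasurable_of_tendsto_ae (𝓝[≠] 0)
    (fun h => ((hF_meas (z₀ + h)).sub (hF_meas z₀)).const_smul h⁻¹)
    (h_diff.mono fun _ ht => ht.hasDerivAt.tendsto_slope_zero)

theorem hasDerivAt_integral_of_differentiableOn_of_norm_le {F : ℂ → α → E} {g : α → ℝ}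
    {z₀ : ℂ} {r : ℝ} (hr : 0 < r) (hF_meas : ∀ z, AEStronglyMeasurable (F z) μ)
    (h_diff : ∀ᵐ t ∂μ, DifferentiableOn ℂ (F · t) (closedBall z₀ (2 * r)))
    (h_bound : ∀ᵐ t ∂μ, ∀ z ∈ closedBall z₀ (2 * r), ‖F z t‖ ≤ g t) (hg : Integrable g μ) :
    HasDerivAt (fun z => ∫ t, F z t ∂μ) (∫ t, deriv (F · t) z₀ ∂μ) z₀ := by
  have h_sub : ∀ z ∈ ball z₀ r, closedBall z r ⊆ closedBall z₀ (2 * r) := fun z hz =>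
    closedBall_subset_closedBall' (by linarith [mem_ball.1 hz])
  have h_hasDeriv : ∀ᵐ t ∂μ, ∀ z ∈ ball z₀ r, HasDerivAt (F · t) (deriv (F · t) z) z := by
    filter_upwards [h_diff] with t ht z hz
    exact (ht.differentiableAt (mem_of_superset (closedBall_mem_nhds z hr)
      (h_sub z hz))).hasDerivAt
  have h_deriv_bound : ∀ᵐ t ∂μ, ∀ z ∈ ball z₀ r, ‖deriv (F · t) z‖ ≤ g t / r := by
    filter_upwards [h_diff, h_bound] with t hdt hbt z hz
    exact norm_deriv_le_of_forall_mem_sphere_norm_le hr (hdt.diffContOnCl_ball (h_sub z hz))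
      fun w hw => hbt w (h_sub z hz (sphere_subset_closedBall hw))
  have hF_int : Integrable (F z₀) μ :=
    hg.mono' (hF_meas z₀) (h_bound.mono fun t ht => ht z₀ (mem_closedBall_self (by positivity)))
  exact (hasDerivAt_integral_of_dominated_loc_of_deriv_le (ball_mem_nhds z₀ hr)
    (Eventually.of_forall hF_meas) hF_int
    (aestronglyMeasurable_deriv_of_differentiableAt hF_meas
      (h_hasDeriv.mono fun t ht => (ht z₀ (mem_ball_self hr)).differentiableAt))
    h_deriv_bound (hg.div_const r) h_hasDeriv).2

end ParametricHolomorphic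

theorem integrableOn_abs_rpow_Ioo {r : ℝ} (hr : -1 < r) :
    IntegrableOn (fun t : ℝ => |t| ^ r) (Ioo (-1) 1) := by
  rw [← Real.ball_zero_eq_Ioo]
  refine integrableOn_ball_of_norm_le_rpow (C := 1) (α := -r) (by simp) (by simp; linarith)
    (Eventually.of_forall fun t => ?_)
    (by fun_prop : Measurable fun t : ℝ => |t| ^ r).aestronglyMeasurable
  simp [abs_rpow_of_nonneg (abs_nonneg t)]

theorem norm_ofReal_cpow_sub_one_le {x : ℝ} (hx : 0 < x) {s : ℂ} (hs0 : 0 < s.re)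
    (hs1 : s.re ≤ 1) : ‖(x : ℂ) ^ s - 1‖ ≤ (2 * ‖s‖ + 4) * |x - 1| := by
  rcases lt_or_ge x (1 / 2) with hx_small | hx_large
  · have h_pow : ‖(x : ℂ) ^ s‖ ≤ 1 := by
      rw [norm_cpow_eq_rpow_re_of_pos hx]
      exact Real.rpow_le_one hx.le (by linarith) hs0.le
    calc ‖(x : ℂ) ^ s - 1‖ ≤ ‖(x : ℂ) ^ s‖ + ‖(1 : ℂ)‖ := norm_sub_le _ _
      _ ≤ 4 * |x - 1| := by rw [norm_one, abs_of_neg (by linarith)]; linarith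
      _ ≤ (2 * ‖s‖ + 4) * |x - 1| := by gcongr; linarith [norm_nonneg s]
  · have h_deriv : ∀ u ∈ Ici (1 / 2 : ℝ),
        HasDerivWithinAt (fun u : ℝ => (u : ℂ) ^ s) (s * (u : ℂ) ^ (s - 1)) (Ici (1 / 2)) u :=
      fun u hu => (hasDerivAt_ofReal_cpow_const (by linarith [mem_Ici.1 hu])
        fun h => by simp [h] at hs0).hasDerivWithinAt
    have h_deriv_le : ∀ u ∈ Ici (1 / 2 : ℝ), ‖s * (u : ℂ) ^ (s - 1)‖ ≤ 2 * ‖s‖ := by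
      intro u hu
      have hu : (1 / 2 : ℝ) ≤ u := hu
      rw [norm_mul, norm_cpow_eq_rpow_re_of_pos (by linarith), mul_comm]
      gcongr
      calc u ^ (s - 1).re ≤ (1 / 2 : ℝ) ^ (s - 1).re :=
            Real.rpow_le_rpow_of_nonpos (by norm_num) hu (by simp; linarith)
        _ ≤ (1 / 2 : ℝ) ^ (-1 : ℝ) :=
            Real.rpow_le_rpow_of_exponent_ge (by norm_num) (by norm_num) (by simp; linarith)
        _ = 2 := by norm_num
    have h_mvt := (convex_Ici _).norm_image_sub_le_of_norm_hasDerivWithin_le h_deriv h_deriv_le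
      (by norm_num : (1 : ℝ) ∈ Ici (1 / 2)) (mem_Ici.2 hx_large)
    rw [ofReal_one, one_cpow, Real.norm_eq_abs] at h_mvt
    linarith [abs_nonneg (x - 1)]

noncomputable def cpowKernel (s : ℂ) (t : ℝ) : ℂ :=
  (((t + 1 : ℝ) : ℂ) ^ s - 1) ^ 2 / (((|t| : ℝ) : ℂ) ^ ((1 : ℂ) + 2 * s))

theorem measurable_cpowKernel (s : ℂ) : Measurable (cpowKernel s) := by
  unfold cpowKernel; fun_prop

theorem norm_cpowKernel_le {s : ℂ} {t b M : ℝ} (ht : t ∈ Ioo (-1 : ℝ) 1) (hs0 : 0 < s.re)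
    (hsb : s.re ≤ b) (hb : b ≤ 1) (hsM : ‖s‖ ≤ M) :
    ‖cpowKernel s t‖ ≤ (2 * M + 4) ^ 2 * |t| ^ (1 - 2 * b) := by
  rcases eq_or_ne t 0 with rfl | ht0
  · simp [cpowKernel]; positivity
  have ht_pos : 0 < |t| := abs_pos.2 ht0
  have ht_lt : |t| < 1 := abs_lt.2 ht
  have h_num : ‖((t + 1 : ℝ) : ℂ) ^ s - 1‖ ≤ (2 * M + 4) * |t| := by
    have := norm_ofReal_cpow_sub_one_le (x := t + 1) (by linarith [ht.1]) hs0 (by linarith)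
    rw [add_sub_cancel_right] at this
    exact this.trans (by gcongr)
  calc ‖cpowKernel s t‖ = ‖((t + 1 : ℝ) : ℂ) ^ s - 1‖ ^ 2 / |t| ^ (1 + 2 * s.re) := by
        rw [cpowKernel, norm_div, norm_pow, norm_cpow_eq_rpow_re_of_pos ht_pos]; simp
    _ ≤ ((2 * M + 4) * |t|) ^ 2 / |t| ^ (1 + 2 * s.re) := by gcongr
    _ = (2 * M + 4) ^ 2 * |t| ^ (1 - 2 * s.re) := by
        rw [mul_pow, mul_div_assoc, ← Real.rpow_two |t|, ← Real.rpow_sub ht_pos]; ring_nf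
    _ ≤ (2 * M + 4) ^ 2 * |t| ^ (1 - 2 * b) := mul_le_mul_of_nonneg_left
        (Real.rpow_le_rpow_of_exponent_ge ht_pos ht_lt.le (by linarith)) (by positivity)

theorem differentiable_cpowKernel {t : ℝ} (ht : -1 < t) : Differentiable ℂ (cpowKernel · t) := by
  rcases eq_or_ne t 0 with rfl | ht0
  · simp [cpowKernel]
  have h1 : ((t + 1 : ℝ) : ℂ) ≠ 0 := ofReal_ne_zero.2 (by linarith)
  have h2 : ((|t| : ℝ) : ℂ) ≠ 0 := ofReal_ne_zero.2 (abs_ne_zero.2 ht0)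
  intro s
  unfold cpowKernel
  exact (((differentiableAt_id.const_cpow (Or.inl h1)).sub_const 1).pow 2).div
    ((differentiableAt_id.const_mul 2).const_add 1 |>.const_cpow (Or.inl h2))
    (by simp [h2])

theorem differentiableAt_integral_cpowKernel {s₀ : ℂ} (h0 : 0 < s₀.re) (h1 : s₀.re < 1) :
    DifferentiableAt ℂ (fun s => ∫ t in Ioo (-1 : ℝ) 1, cpowKernel s t) s₀ := by
  set r := min s₀.re (1 - s₀.re) / 3 with hr
  have hr_pos : 0 < r := by positivity
  have hr₀ : 3 * r ≤ s₀.re := by linarith [min_le_left s₀.re (1 - s₀.re)]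
  have hr₁ : 3 * r ≤ 1 - s₀.re := by linarith [min_le_right s₀.re (1 - s₀.re)]
  have h_ball : ∀ z ∈ closedBall s₀ (2 * r), 0 < z.re ∧ z.re ≤ s₀.re + 2 * r := by
    intro z hz
    have := abs_le.1 ((abs_re_le_norm (z - s₀)).trans (mem_closedBall_iff_norm.1 hz))
    rw [sub_re] at this
    constructor <;> linarith
  refine (hasDerivAt_integral_of_differentiableOn_of_norm_le hr_pos
    (fun z => (measurable_cpowKernel z).aestronglyMeasurable) ?_ ?_
    ((integrableOn_abs_rpow_Ioo (r := 1 - 2 * (s₀.re + 2 * r)) (by linarith)).const_mul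
      ((2 * (‖s₀‖ + 2 * r) + 4) ^ 2))).differentiableAt
  · filter_upwards [ae_restrict_mem measurableSet_Ioo] with t ht
    exact (differentiable_cpowKernel ht.1).differentiableOn
  · filter_upwards [ae_restrict_mem measurableSet_Ioo] with t ht z hz
    exact norm_cpowKernel_le ht (h_ball z hz).1 (h_ball z hz).2 (by linarith)
      (norm_le_of_mem_closedBall hz)

theorem stmt9_general (σ1 σ2 K : ℝ) (h1 : 0 < σ1) (h2 : σ2 < 1) :
    (∃ C : ℝ, ∀ s : ℂ, σ1 ≤ s.re → s.re ≤ σ2 → |s.im| ≤ K →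
      IntegrableOn (fun t : ℝ =>
          ‖((((t + 1 : ℝ) : ℂ) ^ s - 1) ^ 2 / (((|t| : ℝ) : ℂ) ^ ((1 : ℂ) + 2 * s)))‖)
        (Set.Ioo (-1 : ℝ) 1) ∧
      (∫ t in Set.Ioo (-1 : ℝ) 1,
          ‖((((t + 1 : ℝ) : ℂ) ^ s - 1) ^ 2 / (((|t| : ℝ) : ℂ) ^ ((1 : ℂ) + 2 * s)))‖) ≤ C) ∧
    AnalyticOn ℂ (fun s : ℂ => ∫ t in Set.Ioo (-1 : ℝ) 1,
        (((t + 1 : ℝ) : ℂ) ^ s - 1) ^ 2 / (((|t| : ℝ) : ℂ) ^ ((1 : ℂ) + 2 * s)))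
      {s : ℂ | 0 < s.re ∧ s.re < 1} := by
  set C := (2 * (σ2 + K) + 4) ^ 2
  refine ⟨⟨∫ t in Ioo (-1 : ℝ) 1, C * |t| ^ (1 - 2 * σ2), fun s hs1 hs2 hsK => ?_⟩, ?_⟩
  · have hsM : ‖s‖ ≤ σ2 + K := (norm_le_abs_re_add_abs_im s).trans
      (by rw [abs_of_pos (by linarith)]; linarith)
    have h_bound : ∀ t ∈ Ioo (-1 : ℝ) 1, ‖cpowKernel s t‖ ≤ C * |t| ^ (1 - 2 * σ2) :=
      fun t ht => norm_cpowKernel_le ht (by linarith) hs2 h2.le hsM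
    have hg := (integrableOn_abs_rpow_Ioo (r := 1 - 2 * σ2) (by linarith)).const_mul C
    have h_int : IntegrableOn (cpowKernel s) (Ioo (-1) 1) :=
      hg.mono' (measurable_cpowKernel s).aestronglyMeasurable
        (ae_restrict_of_forall_mem measurableSet_Ioo h_bound)
    exact ⟨h_int.norm, setIntegral_mono_on h_int.norm hg measurableSet_Ioo h_bound⟩
  · exact DifferentiableOn.analyticOn
      (fun s hs => (differentiableAt_integral_cpowKernel hs.1 hs.2).differentiableWithinAt)
      (isOpen_Ioo.preimage continuous_re)

theorem stmt9 (σ1 σ2 K : ℝ) (h1 : 0 < σ1) (h12 : σ1 ≤ σ2) (h2 : σ2 < 1) (hK : 0 < K) :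
    (∃ C : ℝ, ∀ s : ℂ, σ1 ≤ s.re → s.re ≤ σ2 → |s.im| ≤ K →
      IntegrableOn (fun t : ℝ =>
          ‖((((t + 1 : ℝ) : ℂ) ^ s - 1) ^ 2 / (((|t| : ℝ) : ℂ) ^ ((1 : ℂ) + 2 * s)))‖)
        (Set.Ioo (-1 : ℝ) 1) ∧
      (∫ t in Set.Ioo (-1 : ℝ) 1,
          ‖((((t + 1 : ℝ) : ℂ) ^ s - 1) ^ 2 / (((|t| : ℝ) : ℂ) ^ ((1 : ℂ) + 2 * s)))‖) ≤ C) ∧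
    AnalyticOn ℂ (fun s : ℂ => ∫ t in Set.Ioo (-1 : ℝ) 1,
        (((t + 1 : ℝ) : ℂ) ^ s - 1) ^ 2 / (((|t| : ℝ) : ℂ) ^ ((1 : ℂ) + 2 * s)))
      {s : ℂ | 0 < s.re ∧ s.re < 1} :=
  stmt9_general σ1 σ2 K h1 h2
end

section
/- Let $f$ be locally Lipschitz, $\rho > 0$ with $f(\rho) = 0$, and suppose $F(t) < F(\rho)$ for all $t \in [0,\rho)$ where $F(t) = \int_0^t f$. If $f(0) < 0$, then there exists $\delta_0 > 0$ such that for all $\delta \in (0, \delta_0)$ the function $g_\delta(t) := f_\delta(t - \delta)$, where $f_\delta(t) = \frac{f(0)}{\delta}(t+\delta)$ for $t \in [-\delta, 0)$ and $f_\delta(t) = f(t)$ for $t \in [0,\rho]$, is locally Lipschitz on $[0, \rho+\delta]$, satisfies $g_\delta(\rho+\delta) = 0$, and its primitive $G_\delta(t) = \int_0^t g_\delta$ satisfies $G_\delta(t) < G_\delta(\rho+\delta)$ for all $t \in [0, \rho+\delta)$. -/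
open MeasureTheory Set

/-! The total mass `G_δ(ρ + δ) = f(0) δ / 2 + F(ρ)` is positive once `δ < 2 F(ρ) / (-f(0))`,
because `F(ρ) > F(0) = 0`. On `[0, δ)` the primitive `G_δ(t) = f(0) t² / (2δ)` is nonpositive,
and on `[δ, ρ + δ)` it equals `f(0) δ / 2 + F(t - δ)`, which stays below the total mass by the
hypothesis on `F`. Local Lipschitz continuity survives the gluing at `δ` because
`g_δ(t) = f(0)/δ · min(t, δ) + f(max(t, δ) - δ) - f(0)`. -/

/-- The paper's `g_δ`: `f` extended to `[-δ, 0)` by the line from `0` to `f 0`, then shifted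
right by `δ`. -/
noncomputable def shiftedExtension (f : ℝ → ℝ) (δ : ℝ) (t : ℝ) : ℝ :=
  if t < δ then f 0 / δ * t else f (t - δ)

namespace shiftedExtension

variable {f : ℝ → ℝ} {δ : ℝ}

lemma eq_of_le (hδ : δ ≠ 0) {t : ℝ} (ht : t ≤ δ) : shiftedExtension f δ t = f 0 / δ * t := by
  rcases ht.lt_or_eq with ht | rfl
  · simp [shiftedExtension, ht]
  · simp [shiftedExtension, hδ]

lemma eq_of_ge {t : ℝ} (ht : δ ≤ t) : shiftedExtension f δ t = f (t - δ) := by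
  simp [shiftedExtension, not_lt.2 ht]

lemma eq_min_max (hδ : δ ≠ 0) :
    shiftedExtension f δ = fun t ↦ f 0 / δ * min t δ + (f (max t δ - δ) - f 0) := by
  ext t
  rcases le_total t δ with ht | ht
  · simp [eq_of_le hδ ht, ht]
  · simp [eq_of_ge ht, ht, hδ]

lemma locallyLipschitz (hf : LocallyLipschitz f) (hδ : δ ≠ 0) :
    LocallyLipschitz (shiftedExtension f δ) := by
  rw [eq_min_max hδ]
  refine ((lipschitzWith_smul (f 0 / δ)).locallyLipschitz.comp
    (LocallyLipschitz.id.min_const δ)).add (.sub ?_ (.const _))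
  exact hf.comp ((LocallyLipschitz.id.max_const δ).sub (.const δ))

lemma continuous (hf : Continuous f) (hδ : δ ≠ 0) : Continuous (shiftedExtension f δ) := by
  rw [eq_min_max hδ]
  fun_prop

lemma integral_of_le (hδ : 0 < δ) {t : ℝ} (ht : t ≤ δ) :
    ∫ τ in (0:ℝ)..t, shiftedExtension f δ τ = f 0 / δ * (t ^ 2 / 2) := by
  rw [intervalIntegral.integral_congr (g := fun τ ↦ f 0 / δ * τ), intervalIntegral.integral_const_mul,
    integral_id]
  · ring
  intro τ hτ
  exact eq_of_le hδ.ne' (hτ.2.trans (max_le hδ.le ht))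

lemma integral_of_ge (hf : Continuous f) (hδ : 0 < δ) {t : ℝ} (ht : δ ≤ t) :
    ∫ τ in (0:ℝ)..t, shiftedExtension f δ τ = f 0 * δ / 2 + ∫ τ in (0:ℝ)..(t - δ), f τ := by
  have hg := continuous hf hδ.ne'
  rw [← intervalIntegral.integral_add_adjacent_intervals (hg.intervalIntegrable 0 δ)
    (hg.intervalIntegrable δ t), integral_of_le hδ le_rfl,
    intervalIntegral.integral_congr (g := fun τ ↦ f (τ - δ)) fun τ hτ ↦ eq_of_ge ?_,
    intervalIntegral.integral_comp_sub_right, sub_self]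
  · field_simp
  · exact (uIcc_of_le ht ▸ hτ).1

end shiftedExtension

theorem stmt18 (f : ℝ → ℝ) (hf : LocallyLipschitz f) (ρ : ℝ) (hρ : 0 < ρ)
    (hfρ : f ρ = 0)
    (hF : ∀ t ∈ Set.Ico (0:ℝ) ρ, (∫ τ in (0:ℝ)..t, f τ) < ∫ τ in (0:ℝ)..ρ, f τ)
    (hf0 : f 0 < 0) :
    ∃ δ0 > (0:ℝ), ∀ δ ∈ Set.Ioo (0:ℝ) δ0, ∀ g : ℝ → ℝ,
      (∀ t, g t = if t < δ then f 0 / δ * t else f (t - δ)) →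
      (∃ L : NNReal, LipschitzOnWith L g (Set.Icc 0 (ρ + δ))) ∧
      g (ρ + δ) = 0 ∧
      ∀ t ∈ Set.Ico (0:ℝ) (ρ + δ),
        (∫ τ in (0:ℝ)..t, g τ) < ∫ τ in (0:ℝ)..(ρ + δ), g τ := by
  set Fρ := ∫ τ in (0:ℝ)..ρ, f τ
  have hFρ : 0 < Fρ := by simpa using hF 0 ⟨le_rfl, hρ⟩
  refine ⟨2 * Fρ / -f 0, div_pos (by positivity) (neg_pos.2 hf0), ?_⟩
  rintro δ ⟨hδ, hδ0⟩ g hg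
  obtain rfl : g = shiftedExtension f δ := funext hg
  have hGρ : ∫ τ in (0:ℝ)..(ρ + δ), shiftedExtension f δ τ = f 0 * δ / 2 + Fρ := by
    rw [shiftedExtension.integral_of_ge hf.continuous hδ (by linarith), add_sub_cancel_right]
  have hmass : 0 < f 0 * δ / 2 + Fρ := by
    rw [lt_div_iff₀ (neg_pos.2 hf0)] at hδ0
    linarith
  refine ⟨(shiftedExtension.locallyLipschitz hf hδ.ne').locallyLipschitzOn
    |>.exists_lipschitzOnWith_of_compact isCompact_Icc,
    by rw [shiftedExtension.eq_of_ge (by linarith), add_sub_cancel_right, hfρ], ?_⟩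
  rintro t ⟨ht0, htρ⟩
  rw [hGρ]
  rcases lt_or_ge t δ with htδ | htδ
  · have : f 0 / δ * (t ^ 2 / 2) ≤ 0 :=
      mul_nonpos_of_nonpos_of_nonneg (div_neg_of_neg_of_pos hf0 hδ).le (by positivity)
    rw [shiftedExtension.integral_of_le hδ htδ.le]
    linarith
  · rw [shiftedExtension.integral_of_ge hf.continuous hδ htδ]
    linarith [hF (t - δ) ⟨by linarith, by linarith⟩]
end
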